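/- Let A ∈ M_{n×n}(ℝ), A_□ = [[0, I_n], [A, 0]] ∈ M_{2n×2n}(ℝ), and b ∈ ℝⁿ. Let P_□(b) be the Brunovsky change-of-basis matrix for (A_□, [0; b]ᵀ) and P_A(b) the Brunovsky change-of-basis matrix for (A, b). Then P_□(b) P_□(b)ᵀ = [[P_A(b) P_A(b)ᵀ, 0], [0, P_A(b) P_A(b)ᵀ]]. Consequently, the smallest eigenvalue of P_□(b) P_□(b)ᵀ equals the smallest eigenvalue of P_A(b) P_A(b)ᵀ. -/

import Mathlib

/-!
Write `S = fromBlocks 0 1 A 0`. Then `S * S = fromBlocks A 0 0 A` and `χ_S(X) = χ_A(X²)`, so the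
odd coefficients of `χ_S` vanish and its even ones are those of `χ_A`. Feeding this into the Horner
recursion `p_k(M) = M p_{k+1}(M) + a_{N-k} I` gives, by downward induction,
`p_{2t}(S) = diag(p_t(A), p_t(A))` and `p_{2t+1}(S) = S p_{2t+2}(S)`. Hence the columns of
`P_□(b)` are alternately `(p_t(A) b, 0)` and `(0, p_t(A) b)`: up to a permutation of its columns,
which does not change `P Pᵀ`, `P_□(b)` is `diag(P_A(b), P_A(b))`. The two Gram matrices then have
the same spectrum, hence the same smallest eigenvalue.
-/

open Matrix Finset

/-- p_k(M) = M^(N-k) + Σ_{j=1}^{N-k} a_j M^(N-k-j), where a_j is the coefficient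
of x^(N-j) in the characteristic polynomial of the N×N matrix M (p_N(M) = I). -/
noncomputable def pkG {m : Type} [Fintype m] [DecidableEq m] (N : ℕ)
    (M : Matrix m m ℝ) (k : ℕ) : Matrix m m ℝ :=
  M ^ (N - k) + ∑ j ∈ Finset.Icc 1 (N - k), M.charpoly.coeff (N - j) • M ^ (N - k - j)

/-- The Brunovsky change-of-basis matrix for (A, b): columns p_k(A) b. -/
noncomputable def PA (n : ℕ) (A : Matrix (Fin n) (Fin n) ℝ) (b : Fin n → ℝ) :
    Matrix (Fin n) (Fin n) ℝ :=
  Matrix.of fun r c => ((pkG n A ((c : ℕ) + 1)).mulVec b) r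

/-- The Brunovsky change-of-basis matrix for (A_□, (0, b)). -/
noncomputable def Psq (n : ℕ) (A : Matrix (Fin n) (Fin n) ℝ) (b : Fin n → ℝ) :
    Matrix (Fin n ⊕ Fin n) (Fin (2 * n)) ℝ :=
  Matrix.of fun r c =>
    ((pkG (2 * n) (Matrix.fromBlocks 0 1 A 0 : Matrix (Fin n ⊕ Fin n) (Fin n ⊕ Fin n) ℝ)
        ((c : ℕ) + 1)).mulVec (Sum.elim 0 b)) r

open Polynomial

namespace Matrix
variable {R m : Type*} [Fintype m] [DecidableEq m]

theorem fromBlocks_zero_one_mul_self [Semiring R] (A : Matrix m m R) :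
    fromBlocks 0 1 A 0 * fromBlocks 0 1 A 0 = fromBlocks A 0 0 A := by
  simp [fromBlocks_multiply]

theorem charpoly_fromBlocks_zero_one [CommRing R] (A : Matrix m m R) :
    (fromBlocks 0 1 A 0).charpoly = expand R 2 A.charpoly := by
  -- Column operations by unipotent block-triangular matrices make the characteristic matrix
  -- block-triangular.
  set M : Matrix m m R[X] := scalar m (X ^ 2) - A.map C
  have hcols : charmatrix (fromBlocks 0 1 A 0) * fromBlocks 1 0 (scalar m (X + 1)) 1 *
      fromBlocks 1 (-1) 0 1 = fromBlocks (-1) 0 (M + scalar m X) (-M) := by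
    simp only [M, charmatrix_fromBlocks, charmatrix_zero, fromBlocks_multiply]
    congr 1 <;> ext i j : 1 <;> by_cases h : i = j <;> simp [h] <;> ring
  have hM : M = (charmatrix A).map (expand R 2) := by
    ext i j
    by_cases h : i = j <;> simp [M, h]
  have hdet := congrArg det hcols
  simp only [det_mul, det_fromBlocks_zero₁₂, det_fromBlocks_zero₂₁, det_one, mul_one, det_neg]
    at hdet
  rw [charpoly, hdet, ← mul_assoc, ← mul_pow, neg_one_mul, neg_neg, one_pow, one_mul, hM,
    charpoly, AlgHom.map_det]
  rfl

theorem charpoly_fromBlocks_zero_one_coeff_two_mul [CommRing R] (A : Matrix m m R) (t : ℕ) :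
    (fromBlocks 0 1 A 0).charpoly.coeff (2 * t) = A.charpoly.coeff t := by
  rw [charpoly_fromBlocks_zero_one, coeff_expand_mul' two_pos]

theorem charpoly_fromBlocks_zero_one_coeff_two_mul_add_one [CommRing R] (A : Matrix m m R)
    (t : ℕ) :
    (fromBlocks 0 1 A 0).charpoly.coeff (2 * t + 1) = 0 := by
  rw [charpoly_fromBlocks_zero_one, coeff_expand two_pos, if_neg (by omega)]

theorem spectrum_fromBlocks_zero [CommRing R] {n : Type*} [Fintype n] [DecidableEq n]
    (B : Matrix m m R) (D : Matrix n n R) :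
    spectrum R (fromBlocks B 0 0 D) = spectrum R B ∪ spectrum R D := by
  ext μ
  have hsub : algebraMap R _ μ - fromBlocks B 0 0 D
      = fromBlocks (algebraMap R _ μ - B) 0 0 (algebraMap R _ μ - D) := by
    ext (i | i) (j | j) <;> simp [algebraMap_eq_diagonal, diagonal_apply]
  simp only [Set.mem_union, spectrum.mem_iff, hsub, isUnit_iff_isUnit_det,
    det_fromBlocks_zero₁₂, IsUnit.mul_iff, not_and_or]

end Matrix

def finSumFinInterleave (n : ℕ) : Fin n ⊕ Fin n ≃ Fin (2 * n) where
  toFun := Sum.elim (fun t => ⟨2 * t, by omega⟩) (fun t => ⟨2 * t + 1, by omega⟩)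
  invFun c := if c.val % 2 = 0 then .inl ⟨c / 2, by omega⟩ else .inr ⟨c / 2, by omega⟩
  left_inv := by rintro (t | t) <;> simp [Fin.ext_iff]; omega
  right_inv c := by
    ext
    by_cases h : c.val % 2 = 0 <;> simp [h] <;> omega

theorem finSumFinInterleave_inl {n : ℕ} (t : Fin n) :
    (finSumFinInterleave n (.inl t) : ℕ) = 2 * t := rfl

theorem finSumFinInterleave_inr {n : ℕ} (t : Fin n) :
    (finSumFinInterleave n (.inr t) : ℕ) = 2 * t + 1 := rfl

section Brunovsky
variable {m : Type} [Fintype m] [DecidableEq m]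

theorem pkG_self (N : ℕ) (M : Matrix m m ℝ) : pkG N M N = 1 := by
  simp [pkG]

theorem pkG_eq_mul_pkG_succ_add {N k : ℕ} (hk : k < N) (M : Matrix m m ℝ) :
    pkG N M k = M * pkG N M (k + 1) + M.charpoly.coeff k • 1 := by
  obtain ⟨d, rfl⟩ : ∃ d, N = k + 1 + d := ⟨N - (k + 1), by omega⟩
  simp only [pkG, show k + 1 + d - k = d + 1 by omega, show k + 1 + d - (k + 1) = d by omega,
    Finset.sum_Icc_succ_top (Nat.le_add_left 1 d), mul_add, Finset.mul_sum, Matrix.mul_smul]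
  have hsum : ∀ j ∈ Icc 1 d, M.charpoly.coeff (k + 1 + d - j) • M ^ (d + 1 - j)
      = M.charpoly.coeff (k + 1 + d - j) • (M * M ^ (d - j)) := fun j hj => by
    rw [← pow_succ', Nat.sub_add_comm (mem_Icc.1 hj).2]
  rw [sum_congr rfl hsum, ← pow_succ', show k + 1 + d - (d + 1) = k by omega, Nat.sub_self,
    pow_zero]
  exact (add_assoc _ _ _).symm

variable (A : Matrix m m ℝ)

theorem pkG_fromBlocks_zero_one_two_mul_add_one_eq_mul {N t : ℕ} (ht : t < N) :
    pkG (2 * N) (fromBlocks 0 1 A 0) (2 * t + 1)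
      = fromBlocks 0 1 A 0 * pkG (2 * N) (fromBlocks 0 1 A 0) (2 * (t + 1)) := by
  rw [pkG_eq_mul_pkG_succ_add (by omega), charpoly_fromBlocks_zero_one_coeff_two_mul_add_one,
    zero_smul, add_zero, mul_add_one]

theorem pkG_fromBlocks_zero_one_two_mul {N t : ℕ} (ht : t ≤ N) :
    pkG (2 * N) (fromBlocks 0 1 A 0) (2 * t) = fromBlocks (pkG N A t) 0 0 (pkG N A t) := by
  induction ht using Nat.decreasingInduction with
  | self => simp only [pkG_self, fromBlocks_one]
  | of_succ t ht ih =>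
    rw [pkG_eq_mul_pkG_succ_add (by omega), pkG_fromBlocks_zero_one_two_mul_add_one_eq_mul A ht,
      ih, ← Matrix.mul_assoc, fromBlocks_zero_one_mul_self,
      charpoly_fromBlocks_zero_one_coeff_two_mul, pkG_eq_mul_pkG_succ_add ht, ← fromBlocks_one,
      fromBlocks_smul, fromBlocks_multiply, fromBlocks_add]
    simp

theorem pkG_fromBlocks_zero_one_two_mul_mulVec {N t : ℕ} (ht : t ≤ N) (b : m → ℝ) :
    pkG (2 * N) (fromBlocks 0 1 A 0) (2 * t) *ᵥ Sum.elim 0 b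
      = Sum.elim (0 : m → ℝ) (pkG N A t *ᵥ b) := by
  rw [pkG_fromBlocks_zero_one_two_mul A ht, fromBlocks_mulVec]
  simp

theorem pkG_fromBlocks_zero_one_two_mul_add_one_mulVec {N t : ℕ} (ht : t < N) (b : m → ℝ) :
    pkG (2 * N) (fromBlocks 0 1 A 0) (2 * t + 1) *ᵥ Sum.elim 0 b
      = Sum.elim (pkG N A (t + 1) *ᵥ b) 0 := by
  rw [pkG_fromBlocks_zero_one_two_mul_add_one_eq_mul A ht, pkG_fromBlocks_zero_one_two_mul A ht,
    ← mulVec_mulVec, fromBlocks_mulVec, fromBlocks_mulVec]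
  simp

end Brunovsky

theorem Psq_submatrix_finSumFinInterleave (n : ℕ) (A : Matrix (Fin n) (Fin n) ℝ)
    (b : Fin n → ℝ) :
    (Psq n A b).submatrix id (finSumFinInterleave n) = fromBlocks (PA n A b) 0 0 (PA n A b) := by
  ext r (t | t) <;> simp only [submatrix_apply, id, Psq, of_apply, finSumFinInterleave_inl,
    finSumFinInterleave_inr]
  · rw [pkG_fromBlocks_zero_one_two_mul_add_one_mulVec A t.isLt]
    cases r <;> rfl
  · rw [add_assoc, ← mul_add_one, pkG_fromBlocks_zero_one_two_mul_mulVec A (t := t + 1) t.isLt]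
    cases r <;> rfl

theorem Psq_mul_transpose (n : ℕ) (A : Matrix (Fin n) (Fin n) ℝ) (b : Fin n → ℝ) :
    Psq n A b * (Psq n A b)ᵀ
      = fromBlocks (PA n A b * (PA n A b)ᵀ) 0 0 (PA n A b * (PA n A b)ᵀ) := by
  rw [← submatrix_mul_transpose_submatrix (finSumFinInterleave n), ← transpose_submatrix,
    Psq_submatrix_finSumFinInterleave, fromBlocks_transpose, fromBlocks_multiply]
  simp

theorem wave_equals_heat_general (n : ℕ)
    (A : Matrix (Fin n) (Fin n) ℝ) (b : Fin n → ℝ)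
    (h1 : (Psq n A b * (Psq n A b)ᵀ).IsHermitian)
    (h2 : (PA n A b * (PA n A b)ᵀ).IsHermitian) :
    Psq n A b * (Psq n A b)ᵀ
        = Matrix.fromBlocks (PA n A b * (PA n A b)ᵀ) 0 0 (PA n A b * (PA n A b)ᵀ)
    ∧ (⨅ i, h1.eigenvalues i) = ⨅ i, h2.eigenvalues i := by
  refine ⟨Psq_mul_transpose n A b, ?_⟩
  have hrange : Set.range h1.eigenvalues = Set.range h2.eigenvalues := by
    rw [← h1.spectrum_real_eq_range_eigenvalues, ← h2.spectrum_real_eq_range_eigenvalues,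
      Psq_mul_transpose, spectrum_fromBlocks_zero, Set.union_self]
  rw [iInf, iInf, hrange]

/-- P_□(b) P_□(b)ᵀ = diag(P_A(b) P_A(b)ᵀ, P_A(b) P_A(b)ᵀ); consequently the
smallest eigenvalues of the two Gram matrices agree. -/
theorem wave_equals_heat (n : ℕ) (hn : 0 < n)
    (A : Matrix (Fin n) (Fin n) ℝ) (b : Fin n → ℝ)
    (h1 : (Psq n A b * (Psq n A b)ᵀ).IsHermitian)
    (h2 : (PA n A b * (PA n A b)ᵀ).IsHermitian) :
    Psq n A b * (Psq n A b)ᵀ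
        = Matrix.fromBlocks (PA n A b * (PA n A b)ᵀ) 0 0 (PA n A b * (PA n A b)ᵀ)
    ∧ (⨅ i, h1.eigenvalues i) = ⨅ i, h2.eigenvalues i :=
  wave_equals_heat_general n A b h1 h2
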